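/- arXiv:2406.08062 — 2 statements merged into one kernel-verified Lean document; each statement's English description precedes it below -/
import Mathlib

section
/- Let G = (V,E) be a finite graph with maximum degree D, and Θ a nonempty family of nonconstant paths such that each path in Θ contains a simple subpath in Θ; let Θ̂ be the corresponding vertex sets of the simple paths. Then there exists C = C(p,D) ≥ 1 such that C⁻¹·Mod_p(Θ,G) ≤ Mod_p^V(Θ̂,G) ≤ C·Mod_p(Θ,G), where Mod_p is the edge modulus and Mod_p^V the vertex modulus. -/
/-!
An edge density `σ` induces the vertex density `v ↦ ∑_{e ∋ v} σ e` (a sum in place of the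
paper's maximum), and a vertex density `ρ` induces the edge density `{a, b} ↦ ρ a + ρ b`.
Charging each edge of a simple path to its first endpoint shows that the first transfer preserves
admissibility; every vertex of a nonconstant path lies on one of its edges, so the second one does
too, once each path of `Θ` is replaced by a simple subpath in `Θ`. The power-mean inequality and
the degree bound multiply the `p`-masses by at most `2 D^(p-1)` and `2^(p-1) D` respectively.
-/

open Classical Real

noncomputable section

namespace Paper

variable {V : Type*} [Fintype V] [DecidableEq V]

/-- A path in a graph `G`, packaged together with its endpoints. -/
def GPath (G : SimpleGraph V) : Type _ := Σ u v : V, G.Walk u v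

/-- The `ρ`-length of a path: the sum of `ρ` over its edges. -/
def lenρ (G : SimpleGraph V) (ρ : Sym2 V → ℝ) (θ : GPath G) : ℝ :=
  (θ.2.2.edges.map ρ).sum

/-- A density on a graph: nonnegative and supported on the edge set. -/
def IsDensity (G : SimpleGraph V) (ρ : Sym2 V → ℝ) : Prop :=
  (∀ e, 0 ≤ ρ e) ∧ ∀ e, e ∉ G.edgeSet → ρ e = 0

/-- `ρ` is admissible for the path family `Θ`. -/
def Admissible (G : SimpleGraph V) (Θ : Set (GPath G)) (ρ : Sym2 V → ℝ) : Prop :=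
  (∀ e, 0 ≤ ρ e) ∧ ∀ θ ∈ Θ, 1 ≤ lenρ G ρ θ

/-- The `p`-mass of a density: `∑_{e ∈ E} ρ(e)^p`. -/
def massE (G : SimpleGraph V) (p : ℝ) (ρ : Sym2 V → ℝ) : ℝ :=
  ∑ e : Sym2 V, if e ∈ G.edgeSet then ρ e ^ p else 0

/-- The edge `p`-modulus of a family of paths. -/
def ModE (G : SimpleGraph V) (p : ℝ) (Θ : Set (GPath G)) : ℝ :=
  sInf {m | ∃ ρ, Admissible G Θ ρ ∧ massE G p ρ = m}

/-- The optimal admissible density for a path family. -/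
def IsOptDensityE (G : SimpleGraph V) (p : ℝ) (Θ : Set (GPath G)) (ρ : Sym2 V → ℝ) : Prop :=
  IsDensity G ρ ∧ Admissible G Θ ρ ∧
    ∀ σ, IsDensity G σ → Admissible G Θ σ → massE G p ρ ≤ massE G p σ

/-- The family `Θ(A,B)` of paths connecting `A` to `B`. -/
def pathsBetween (G : SimpleGraph V) (A B : Set V) : Set (GPath G) :=
  {θ | θ.1 ∈ A ∧ θ.2.1 ∈ B}

/-- Vertex `p`-modulus of a family of vertex sets. -/
def ModV (p : ℝ) (Θh : Set (Finset V)) : ℝ :=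
  sInf {m | ∃ ρ : V → ℝ, (∀ v, 0 ≤ ρ v) ∧ (∀ s ∈ Θh, 1 ≤ ∑ v ∈ s, ρ v) ∧
    (∑ v : V, ρ v ^ p) = m}

/-- Maximum degree of a graph. -/
def maxDeg (G : SimpleGraph V) : ℕ :=
  Finset.univ.sup fun v : V => Nat.card {u // G.Adj v u}

/-- `|U(x) − U(y)|` as a function on unordered pairs. -/
def ediff (U : V → ℝ) : Sym2 V → ℝ :=
  Sym2.lift ⟨fun x y => |U x - U y|, fun x y => abs_sub_comm (U x) (U y)⟩

/-- The `p`-energy `∑_{{x,y}∈E} |U(x)−U(y)|^p` of a potential. -/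
def capMass (G : SimpleGraph V) (p : ℝ) (U : V → ℝ) : ℝ :=
  ∑ e : Sym2 V, if e ∈ G.edgeSet then ediff U e ^ p else 0

/-- The `p`-capacity from `A` to `B`. -/
def CapE (G : SimpleGraph V) (p : ℝ) (A B : Finset V) : ℝ :=
  sInf {m | ∃ U : V → ℝ, (∀ a ∈ A, U a = 0) ∧ (∀ b ∈ B, U b = 1) ∧ capMass G p U = m}

/-- `U` is `p`-harmonic in `A`. -/
def pHarmOn (G : SimpleGraph V) (p : ℝ) (U : V → ℝ) (A : Set V) : Prop :=
  ∀ x ∈ A, (∑ y : V,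
    if G.Adj x y then Real.sign (U x - U y) * |U x - U y| ^ (p - 1) else 0) = 0

/-- The (outer) vertex boundary of `A`. -/
def vBoundary (G : SimpleGraph V) (A : Set V) : Set V :=
  {x | x ∉ A ∧ ∃ y ∈ A, G.Adj x y}

/-- A flow from `A` to `B`: antisymmetric, supported on edges, divergence free off `A ∪ B`. -/
def IsFlow (G : SimpleGraph V) (A B : Finset V) (F : V → V → ℝ) : Prop :=
  (∀ x y, F x y = - F y x) ∧ (∀ x y, ¬ G.Adj x y → F x y = 0) ∧
  (∀ x, x ∉ A → x ∉ B → (∑ y : V, F x y) = 0)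

/-- The total flow out of `A`. -/
def totalFlow (A : Finset V) (F : V → V → ℝ) : ℝ := ∑ x ∈ A, ∑ y : V, F x y

/-- `|F(e)|` as a function on unordered pairs. -/
def flowAbs (F : V → V → ℝ) : Sym2 V → ℝ :=
  Sym2.lift ⟨fun x y => |F x y| ⊔ |F y x|, fun x y => sup_comm _ _⟩

/-- The `q`-energy of a flow. -/
def energyQ (G : SimpleGraph V) (q : ℝ) (F : V → V → ℝ) : ℝ :=
  ∑ e : Sym2 V, if e ∈ G.edgeSet then flowAbs F e ^ q else 0

/-- The minimal `q`-energy among unit flows from `A` to `B`. -/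
def EminQ (G : SimpleGraph V) (q : ℝ) (A B : Finset V) : ℝ :=
  sInf {m | ∃ F, IsFlow G A B F ∧ totalFlow A F = 1 ∧ energyQ G q F = m}

end Paper


open Finset SimpleGraph

theorem List.sum_map_le_sum_map_of_nodup_of_subset {α M : Type*} [AddCommMonoid M] [PartialOrder M]
    [IsOrderedAddMonoid M] {l₁ l₂ : List α} (hl₁ : l₁.Nodup) (h : l₁ ⊆ l₂) {f : α → M}
    (hf : ∀ a, 0 ≤ f a) : (l₁.map f).sum ≤ (l₂.map f).sum := by
  obtain ⟨l, hperm, hsub⟩ := hl₁.subperm h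
  rw [← (hperm.map f).sum_eq]
  exact (hsub.map f).sum_le_sum fun _ _ => by grind

theorem Real.sInf_le_mul_sInf {S T : Set ℝ} {c : ℝ} (hc : 0 ≤ c) (hS : S.Nonempty)
    (hT : ∀ y ∈ T, 0 ≤ y) (h : ∀ x ∈ S, ∃ y ∈ T, y ≤ c * x) : sInf T ≤ c * sInf S := by
  rcases hc.eq_or_lt with rfl | hc
  · obtain ⟨x, hx⟩ := hS
    obtain ⟨y, hy, hyx⟩ := h x hx
    simpa using (csInf_le ⟨0, hT⟩ hy).trans hyx
  · rw [← div_le_iff₀' hc]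
    refine le_csInf hS fun x hx => ?_
    obtain ⟨y, hy, hyx⟩ := h x hx
    rw [div_le_iff₀' hc]
    exact (csInf_le ⟨0, hT⟩ hy).trans hyx

namespace SimpleGraph

variable {V : Type*} {G : SimpleGraph V}

namespace Walk

theorem sum_map_edges_le_sum_map_support {h : V → ℝ} {ρ : Sym2 V → ℝ} (h0 : ∀ v, 0 ≤ h v)
    (hρ : ∀ a b, G.Adj a b → ρ s(a, b) ≤ h a) {u v : V} (w : G.Walk u v) :
    (w.edges.map ρ).sum ≤ (w.support.map h).sum := by
  induction w with
  | nil => simpa using h0 _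
  | cons hadj w ih =>
    simp only [edges_cons, support_cons, List.map_cons, List.sum_cons]
    linarith [hρ _ _ hadj]

theorem sum_map_support_le_add_sum_map_edges {h : V → ℝ} {ρ : Sym2 V → ℝ} (h0 : ∀ v, 0 ≤ h v)
    (hρ : ∀ a b, G.Adj a b → h a + h b ≤ ρ s(a, b)) {u v : V} (w : G.Walk u v) :
    (w.support.map h).sum ≤ h u + (w.edges.map ρ).sum := by
  induction w with
  | nil => simp
  | @cons a b _ hadj w ih =>
    simp only [edges_cons, support_cons, List.map_cons, List.sum_cons]
    linarith [hρ a b hadj, h0 a]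

theorem sum_map_support_le_sum_map_edges {h : V → ℝ} {ρ : Sym2 V → ℝ} (h0 : ∀ v, 0 ≤ h v)
    (hρ : ∀ a b, G.Adj a b → h a + h b ≤ ρ s(a, b)) {u v : V} (w : G.Walk u v)
    (hw : w.length ≠ 0) : (w.support.map h).sum ≤ (w.edges.map ρ).sum := by
  cases w with
  | nil => simp at hw
  | cons hadj w =>
    simp only [edges_cons, support_cons, List.map_cons, List.sum_cons]
    linarith [hρ _ _ hadj, sum_map_support_le_add_sum_map_edges h0 hρ w]

end Walk

variable [Fintype V] [DecidableEq V] [DecidableRel G.Adj]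

theorem sum_edgeFinset_sum_toFinset {M : Type*} [AddCommMonoid M] (F : V → Sym2 V → M) :
    ∑ e ∈ G.edgeFinset, ∑ v ∈ e.toFinset, F v e = ∑ v, ∑ e ∈ G.incidenceFinset v, F v e :=
  Finset.sum_comm' fun e v => by
    simp [mem_incidenceFinset, incidenceSet, Sym2.mem_toFinset]

theorem card_toFinset_of_mem_edgeFinset {e : Sym2 V} (he : e ∈ G.edgeFinset) :
    #e.toFinset = 2 :=
  Sym2.card_toFinset_of_not_isDiag e (G.not_isDiag_of_mem_edgeSet (mem_edgeFinset.1 he))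

end SimpleGraph

namespace Paper

variable {V : Type*} {G : SimpleGraph V} {Θ : Set (GPath G)}

theorem admissible_one (hlen : ∀ θ ∈ Θ, θ.2.2.length ≠ 0) : Admissible G Θ fun _ => 1 := by
  refine ⟨fun _ => zero_le_one, fun θ hθ => ?_⟩
  rw [lenρ, List.map_const', List.sum_replicate, SimpleGraph.Walk.length_edges, nsmul_one]
  exact_mod_cast Nat.one_le_iff_ne_zero.2 (hlen θ hθ)

section

variable [DecidableEq V]

def vertexToEdge (ρ : V → ℝ) (e : Sym2 V) : ℝ :=
  ∑ v ∈ e.toFinset, ρ v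

theorem vertexToEdge_of_adj (ρ : V → ℝ) {a b : V} (hab : G.Adj a b) :
    vertexToEdge ρ s(a, b) = ρ a + ρ b := by
  rw [vertexToEdge, Sym2.toFinset_mk_eq, sum_pair hab.ne]

theorem vertexToEdge_nonneg {ρ : V → ℝ} (hρ : ∀ v, 0 ≤ ρ v) (e : Sym2 V) :
    0 ≤ vertexToEdge ρ e :=
  sum_nonneg fun v _ => hρ v

def simpleSupports (Θ : Set (GPath G)) : Set (Finset V) :=
  {s | ∃ θ ∈ Θ, θ.2.2.IsPath ∧ s = θ.2.2.support.toFinset}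

theorem one_le_sum_one_of_mem_simpleSupports {s : Finset V} (hs : s ∈ simpleSupports Θ) :
    1 ≤ ∑ _ ∈ s, (1 : ℝ) := by
  obtain ⟨θ, -, -, rfl⟩ := hs
  rw [sum_const, nsmul_one, Nat.one_le_cast, Nat.one_le_iff_ne_zero, card_ne_zero]
  exact ⟨θ.1, List.mem_toFinset.2 θ.2.2.start_mem_support⟩

theorem admissible_vertexToEdge (hlen : ∀ θ ∈ Θ, θ.2.2.length ≠ 0)
    (hsub : ∀ θ ∈ Θ, ∃ θ' ∈ Θ, θ'.2.2.IsPath ∧ θ'.2.2.edges ⊆ θ.2.2.edges)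
    {ρ : V → ℝ} (hρ0 : ∀ v, 0 ≤ ρ v)
    (hρ : ∀ s ∈ simpleSupports Θ, 1 ≤ ∑ v ∈ s, ρ v) :
    Admissible G Θ (vertexToEdge ρ) := by
  refine ⟨vertexToEdge_nonneg hρ0, fun θ hθ => ?_⟩
  obtain ⟨θ', hθ', hpath, hθ'θ⟩ := hsub θ hθ
  calc 1 ≤ ∑ v ∈ θ'.2.2.support.toFinset, ρ v := hρ _ ⟨θ', hθ', hpath, rfl⟩
    _ = (θ'.2.2.support.map ρ).sum := List.sum_toFinset _ hpath.support_nodup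
    _ ≤ lenρ G (vertexToEdge ρ) θ' :=
      θ'.2.2.sum_map_support_le_sum_map_edges hρ0
        (fun _ _ hab => (vertexToEdge_of_adj ρ hab).ge) (hlen θ' hθ')
    _ ≤ lenρ G (vertexToEdge ρ) θ :=
      List.sum_map_le_sum_map_of_nodup_of_subset hpath.isTrail.edges_nodup hθ'θ
        (vertexToEdge_nonneg hρ0)

end

variable [Fintype V]

theorem degree_le_of_maxDeg_le {D : ℕ} (hD : maxDeg G ≤ D) (v : V) : G.degree v ≤ D := by
  refine le_trans ?_ ((Finset.le_sup (f := fun v : V => Nat.card {u // G.Adj v u})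
    (mem_univ v)).trans hD)
  rw [← card_neighborSet_eq_degree, ← Nat.card_eq_fintype_card]
  rfl

theorem massE_eq_sum_edgeFinset (p : ℝ) (ρ : Sym2 V → ℝ) :
    massE G p ρ = ∑ e ∈ G.edgeFinset, ρ e ^ p := by
  rw [massE, ← sum_filter]
  congr 1
  ext e
  simp

theorem massE_nonneg (p : ℝ) {ρ : Sym2 V → ℝ} (hρ : ∀ e, 0 ≤ ρ e) :
    0 ≤ massE G p ρ := by
  rw [massE_eq_sum_edgeFinset]
  exact sum_nonneg fun e _ => Real.rpow_nonneg (hρ e) p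

theorem ModE_nonneg (p : ℝ) (Θ : Set (GPath G)) : 0 ≤ ModE G p Θ :=
  Real.sInf_nonneg fun _ ⟨_, hρ, hm⟩ => hm ▸ massE_nonneg p hρ.1

theorem ModV_nonneg (p : ℝ) (Θh : Set (Finset V)) : 0 ≤ ModV p Θh :=
  Real.sInf_nonneg fun _ ⟨_, hρ, _, hm⟩ =>
    hm ▸ sum_nonneg fun v _ => Real.rpow_nonneg (hρ v) p

variable [DecidableEq V]

def edgeToVertex (G : SimpleGraph V) (σ : Sym2 V → ℝ) (v : V) : ℝ :=
  ∑ e ∈ G.incidenceFinset v, σ e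

theorem edgeToVertex_nonneg {σ : Sym2 V → ℝ} (hσ : ∀ e, 0 ≤ σ e) (v : V) :
    0 ≤ edgeToVertex G σ v :=
  sum_nonneg fun e _ => hσ e

theorem le_edgeToVertex {σ : Sym2 V → ℝ} (hσ : ∀ e, 0 ≤ σ e) {a b : V}
    (hab : G.Adj a b) :
    σ s(a, b) ≤ edgeToVertex G σ a :=
  single_le_sum (fun e _ => hσ e)
    ((mem_incidenceFinset G a _).2 (G.mk'_mem_incidenceSet_left_iff.2 hab))

theorem sum_rpow_edgeToVertex_le {p : ℝ} (hp : 1 ≤ p) {D : ℕ} (hD : ∀ v, G.degree v ≤ D)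
    {σ : Sym2 V → ℝ} (hσ : ∀ e, 0 ≤ σ e) :
    ∑ v, edgeToVertex G σ v ^ p ≤ 2 * (D : ℝ) ^ (p - 1) * massE G p σ := by
  have hv : ∀ v, edgeToVertex G σ v ^ p ≤
      (D : ℝ) ^ (p - 1) * ∑ e ∈ G.incidenceFinset v, σ e ^ p := by
    intro v
    refine (Real.rpow_sum_le_const_mul_sum_rpow_of_nonneg _ hp fun e _ => hσ e).trans ?_
    have hcard : (#(G.incidenceFinset v) : ℝ) ≤ D := by
      rw [card_incidenceFinset_eq_degree]
      exact_mod_cast hD v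
    exact mul_le_mul_of_nonneg_right (Real.rpow_le_rpow (Nat.cast_nonneg _) hcard (by linarith))
      (sum_nonneg fun e _ => Real.rpow_nonneg (hσ e) p)
  calc ∑ v, edgeToVertex G σ v ^ p
      ≤ ∑ v, (D : ℝ) ^ (p - 1) * ∑ e ∈ G.incidenceFinset v, σ e ^ p :=
        sum_le_sum fun v _ => hv v
    _ = (D : ℝ) ^ (p - 1) * ∑ e ∈ G.edgeFinset, ∑ v ∈ e.toFinset, σ e ^ p := by
      rw [← mul_sum, sum_edgeFinset_sum_toFinset]
    _ = 2 * (D : ℝ) ^ (p - 1) * massE G p σ := by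
      rw [massE_eq_sum_edgeFinset, mul_sum, mul_sum]
      refine sum_congr rfl fun e he => ?_
      rw [sum_const, card_toFinset_of_mem_edgeFinset he, nsmul_eq_mul]
      push_cast
      ring

theorem massE_vertexToEdge_le {p : ℝ} (hp : 1 ≤ p) {D : ℕ} (hD : ∀ v, G.degree v ≤ D)
    {ρ : V → ℝ} (hρ : ∀ v, 0 ≤ ρ v) :
    massE G p (vertexToEdge ρ) ≤ 2 ^ (p - 1) * D * ∑ v, ρ v ^ p := by
  have he : ∀ e ∈ G.edgeFinset,
      vertexToEdge ρ e ^ p ≤ 2 ^ (p - 1) * ∑ v ∈ e.toFinset, ρ v ^ p := by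
    intro e he
    have := Real.rpow_sum_le_const_mul_sum_rpow_of_nonneg e.toFinset hp fun v _ => hρ v
    rwa [card_toFinset_of_mem_edgeFinset he, Nat.cast_ofNat] at this
  calc massE G p (vertexToEdge ρ)
      ≤ ∑ e ∈ G.edgeFinset, 2 ^ (p - 1) * ∑ v ∈ e.toFinset, ρ v ^ p := by
        rw [massE_eq_sum_edgeFinset]
        exact sum_le_sum he
    _ = 2 ^ (p - 1) * ∑ v, G.degree v * ρ v ^ p := by
        rw [← mul_sum, sum_edgeFinset_sum_toFinset]
        simp [card_incidenceFinset_eq_degree]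
    _ ≤ 2 ^ (p - 1) * D * ∑ v, ρ v ^ p := by
        rw [mul_assoc, mul_sum _ _ (D : ℝ)]
        gcongr with v
        · exact Real.rpow_nonneg (hρ v) p
        · exact_mod_cast hD v

theorem one_le_sum_edgeToVertex {σ : Sym2 V → ℝ} (hσ : Admissible G Θ σ) {s : Finset V}
    (hs : s ∈ simpleSupports Θ) : 1 ≤ ∑ v ∈ s, edgeToVertex G σ v := by
  obtain ⟨θ, hθ, hpath, rfl⟩ := hs
  rw [List.sum_toFinset _ hpath.support_nodup]
  exact (hσ.2 θ hθ).trans (θ.2.2.sum_map_edges_le_sum_map_support (edgeToVertex_nonneg hσ.1)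
    fun _ _ hab => le_edgeToVertex hσ.1 hab)

theorem ModV_le_mul_ModE {p : ℝ} (hp : 1 ≤ p) {D : ℕ} (hD : ∀ v, G.degree v ≤ D)
    (hlen : ∀ θ ∈ Θ, θ.2.2.length ≠ 0) :
    ModV p (simpleSupports Θ) ≤ 2 * (D : ℝ) ^ (p - 1) * ModE G p Θ :=
  Real.sInf_le_mul_sInf (by positivity) ⟨_, _, admissible_one hlen, rfl⟩
    (fun _ ⟨_, hρ, _, hm⟩ => hm ▸ sum_nonneg fun v _ => Real.rpow_nonneg (hρ v) p)
    fun _ ⟨σ, hσ, hm⟩ => ⟨_, ⟨edgeToVertex G σ, edgeToVertex_nonneg hσ.1,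
      fun _ hs => one_le_sum_edgeToVertex hσ hs, rfl⟩,
      hm ▸ sum_rpow_edgeToVertex_le hp hD hσ.1⟩

theorem ModE_le_mul_ModV {p : ℝ} (hp : 1 ≤ p) {D : ℕ} (hD : ∀ v, G.degree v ≤ D)
    (hlen : ∀ θ ∈ Θ, θ.2.2.length ≠ 0)
    (hsub : ∀ θ ∈ Θ, ∃ θ' ∈ Θ, θ'.2.2.IsPath ∧ θ'.2.2.edges ⊆ θ.2.2.edges) :
    ModE G p Θ ≤ 2 ^ (p - 1) * D * ModV p (simpleSupports Θ) :=
  Real.sInf_le_mul_sInf (by positivity)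
    ⟨_, fun _ => 1, fun _ => zero_le_one,
      fun _ hs => one_le_sum_one_of_mem_simpleSupports hs, rfl⟩
    (fun _ ⟨_, hρ, hm⟩ => hm ▸ massE_nonneg p hρ.1)
    fun _ ⟨ρ, hρ0, hρ, hm⟩ =>
      ⟨_, ⟨vertexToEdge ρ, admissible_vertexToEdge hlen hsub hρ0 hρ, rfl⟩,
      hm ▸ massE_vertexToEdge_le hp hD hρ0⟩

end Paper

open Paper in
/-- Comparability of edge modulus and vertex modulus, with a constant
depending only on `p` and the degree bound `D`: for every graph with maximum degree at
most `D` and every nonempty family `Θ` of nonconstant paths each of which contains a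
simple subpath belonging to `Θ`, letting `Θ̂` be the vertex sets of the simple paths
of `Θ`, one has `C⁻¹·Mod_p(Θ) ≤ Mod_p^V(Θ̂) ≤ C·Mod_p(Θ)`. -/
theorem statement1 (p : ℝ) (hp : 1 ≤ p) (D : ℕ) :
    ∃ C : ℝ, 1 ≤ C ∧
      ∀ (V : Type) (_ : Fintype V) (_ : DecidableEq V) (G : SimpleGraph V),
        maxDeg G ≤ D →
        ∀ Θ : Set (GPath G), Θ.Nonempty →
          (∀ θ ∈ Θ, θ.2.2.length ≠ 0) →
          (∀ θ ∈ Θ, ∃ θ' ∈ Θ, θ'.2.2.IsPath ∧ θ'.2.2.edges ⊆ θ.2.2.edges) →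
          C⁻¹ * ModE G p Θ ≤
              ModV p {s : Finset V | ∃ θ ∈ Θ, θ.2.2.IsPath ∧ s = θ.2.2.support.toFinset} ∧
            ModV p {s : Finset V | ∃ θ ∈ Θ, θ.2.2.IsPath ∧ s = θ.2.2.support.toFinset} ≤
              C * ModE G p Θ := by
  set C : ℝ := max 1 (max (2 * (D : ℝ) ^ (p - 1)) (2 ^ (p - 1) * D))
  have hC : 0 < C := zero_lt_one.trans_le (le_max_left _ _)
  refine ⟨C, le_max_left _ _, fun V _ _ G hD Θ _ hlen hsub => ⟨?_, ?_⟩⟩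
  · rw [inv_mul_le_iff₀ hC]
    exact (ModE_le_mul_ModV hp (degree_le_of_maxDeg_le hD) hlen hsub).trans
      (mul_le_mul_of_nonneg_right ((le_max_right _ _).trans (le_max_right _ _)) (ModV_nonneg _ _))
  · exact (ModV_le_mul_ModE hp (degree_le_of_maxDeg_le hD) hlen).trans
      (mul_le_mul_of_nonneg_right ((le_max_left _ _).trans (le_max_right _ _)) (ModE_nonneg _ _))
end
end

section
/- Let G = (V,E) be a finite connected graph, p > 1, and A, B ⊆ V nonempty disjoint subsets. Then Mod_p(Θ(A,B),G) = Cap_p(A,B,G), i.e., the p-modulus of the family of paths from A to B equals the p-capacity from A to B. -/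
open Classical Real

noncomputable section

section Aux

open Paper

variable {V : Type*} [Fintype V] [DecidableEq V]

/-- `min · 1` is 1-Lipschitz. -/
lemma min1_lip (a b : ℝ) : |min a 1 - min b 1| ≤ |a - b| := by
  have h : ∀ x y : ℝ, min x 1 - min y 1 ≤ |x - y| := by
    intro x y
    have h1 : min x 1 ≤ min (y + |x - y|) (1 + |x - y|) :=
      min_le_min (by have := le_abs_self (x - y); linarith)
        (by have := abs_nonneg (x - y); linarith)
    have h2 : min (y + |x - y|) (1 + |x - y|) = min y 1 + |x - y| := by
      rw [min_add_add_right]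
    linarith
  rw [abs_sub_le_iff]
  exact ⟨h a b, by rw [abs_sub_comm]; exact h b a⟩

lemma walk_ediff_le {G : SimpleGraph V} (U : V → ℝ) {u v : V} (w : G.Walk u v) :
    |U u - U v| ≤ (w.edges.map (ediff U)).sum := by
  induction w with
  | nil => simp
  | @cons u x v h w ih =>
    have he : ediff U s(u, x) = |U u - U x| := rfl
    have := abs_sub (U u - U x) (U v - U x)
    simp only [SimpleGraph.Walk.edges_cons, List.map_cons, List.sum_cons, he]
    have htri : |U u - U v| ≤ |U u - U x| + |U x - U v| := abs_sub_le _ _ _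
    linarith

lemma walk_len_nonneg {G : SimpleGraph V} {ρ : Sym2 V → ℝ} (hρ : ∀ e, 0 ≤ ρ e)
    {u v : V} (w : G.Walk u v) : 0 ≤ (w.edges.map ρ).sum := by
  apply List.sum_nonneg
  intro x hx
  rcases List.mem_map.mp hx with ⟨e, -, rfl⟩
  exact hρ e

/-- The `ρ`-distance from `A`. -/
noncomputable def dρ (G : SimpleGraph V) (A : Finset V) (ρ : Sym2 V → ℝ) (x : V) : ℝ :=
  sInf {r | ∃ a ∈ A, ∃ w : G.Walk a x, (w.edges.map ρ).sum = r}

variable {G : SimpleGraph V} {A : Finset V} {ρ : Sym2 V → ℝ}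

lemma dρ_set_nonempty (hG : G.Connected) (hA : A.Nonempty) (x : V) :
    {r | ∃ a ∈ A, ∃ w : G.Walk a x, (w.edges.map ρ).sum = r}.Nonempty := by
  obtain ⟨a, ha⟩ := hA
  obtain ⟨w⟩ := hG.preconnected a x
  exact ⟨_, a, ha, w, rfl⟩

lemma dρ_set_bdd (hρ : ∀ e, 0 ≤ ρ e) (x : V) :
    BddBelow {r | ∃ a ∈ A, ∃ w : G.Walk a x, (w.edges.map ρ).sum = r} := by
  refine ⟨0, ?_⟩
  rintro r ⟨a, -, w, rfl⟩
  exact walk_len_nonneg hρ w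

lemma dρ_nonneg (hG : G.Connected) (hA : A.Nonempty) (hρ : ∀ e, 0 ≤ ρ e) (x : V) :
    0 ≤ dρ G A ρ x :=
  le_csInf (dρ_set_nonempty hG hA x) (by rintro r ⟨a, -, w, rfl⟩; exact walk_len_nonneg hρ w)

lemma dρ_eq_zero (hG : G.Connected) (hA : A.Nonempty) (hρ : ∀ e, 0 ≤ ρ e)
    {a : V} (ha : a ∈ A) : dρ G A ρ a = 0 := by
  have h1 : dρ G A ρ a ≤ 0 :=
    csInf_le (dρ_set_bdd hρ a) ⟨a, ha, SimpleGraph.Walk.nil, by simp⟩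
  exact le_antisymm h1 (dρ_nonneg hG hA hρ a)

lemma dρ_le_adj (hG : G.Connected) (hA : A.Nonempty) (hρ : ∀ e, 0 ≤ ρ e)
    {x y : V} (h : G.Adj y x) : dρ G A ρ x ≤ dρ G A ρ y + ρ s(x, y) := by
  have key : ∀ r ∈ {r | ∃ a ∈ A, ∃ w : G.Walk a y, (w.edges.map ρ).sum = r},
      dρ G A ρ x - ρ s(x, y) ≤ r := by
    rintro r ⟨a, ha, w, rfl⟩
    have hle : dρ G A ρ x ≤ ((w.concat h).edges.map ρ).sum :=
      csInf_le (dρ_set_bdd hρ x) ⟨a, ha, w.concat h, rfl⟩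
    rw [SimpleGraph.Walk.edges_concat] at hle
    simp only [List.concat_eq_append, List.map_append, List.sum_append, List.map_cons,
      List.map_nil, List.sum_cons, List.sum_nil] at hle
    have hsym : ρ s(y, x) = ρ s(x, y) := by rw [Sym2.eq_swap]
    linarith
  have := le_csInf (dρ_set_nonempty hG hA y) key
  have hd : dρ G A ρ y = sInf {r | ∃ a ∈ A, ∃ w : G.Walk a y, (w.edges.map ρ).sum = r} := rfl
  linarith [hd ▸ this]

lemma dρ_abs_adj (hG : G.Connected) (hA : A.Nonempty) (hρ : ∀ e, 0 ≤ ρ e)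
    {x y : V} (h : G.Adj x y) : |dρ G A ρ x - dρ G A ρ y| ≤ ρ s(x, y) := by
  rw [abs_sub_le_iff]
  constructor
  · have := dρ_le_adj hG hA hρ (G := G) (A := A) h.symm
    linarith
  · have := dρ_le_adj hG hA hρ (G := G) (A := A) h
    have hsym : ρ s(y, x) = ρ s(x, y) := by rw [Sym2.eq_swap]
    linarith

lemma dρ_ge_one {B : Finset V}
    (hadm : Admissible G (pathsBetween G (↑A : Set V) (↑B : Set V)) ρ)
    (hG : G.Connected) (hA : A.Nonempty) {b : V} (hb : b ∈ B) :
    1 ≤ dρ G A ρ b := by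
  apply le_csInf (dρ_set_nonempty hG hA b)
  rintro r ⟨a, ha, w, rfl⟩
  exact hadm.2 ⟨a, b, w⟩ ⟨ha, hb⟩

end Aux

open Paper in
/-- For a finite connected graph, `p > 1`, and nonempty disjoint
`A, B ⊆ V`, the edge `p`-modulus of the family of paths from `A` to `B` equals
the `p`-capacity from `A` to `B`. -/
theorem statement2 {V : Type*} [Fintype V] [DecidableEq V] (G : SimpleGraph V)
    (hG : G.Connected) (p : ℝ) (hp : 1 < p) (A B : Finset V)
    (hA : A.Nonempty) (hB : B.Nonempty) (hAB : Disjoint A B) :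
    ModE G p (pathsBetween G (↑A : Set V) (↑B : Set V)) = CapE G p A B := by
  have hp0 : 0 ≤ p := le_of_lt (lt_trans one_pos hp)
  set Θ := pathsBetween G (↑A : Set V) (↑B : Set V) with hΘ
  set Sm := {m | ∃ ρ, Admissible G Θ ρ ∧ massE G p ρ = m} with hSm
  set Sc := {m | ∃ U : V → ℝ, (∀ a ∈ A, U a = 0) ∧ (∀ b ∈ B, U b = 1) ∧ capMass G p U = m}
    with hSc
  -- Mod set is bounded below by 0
  have hmbdd : BddBelow Sm := by
    refine ⟨0, ?_⟩
    rintro m ⟨ρ, hadm, rfl⟩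
    apply Finset.sum_nonneg
    intro e _
    split
    · exact Real.rpow_nonneg (hadm.1 e) p
    · exact le_refl 0
  -- Cap set is bounded below by 0
  have hcbdd : BddBelow Sc := by
    refine ⟨0, ?_⟩
    rintro m ⟨U, -, -, rfl⟩
    apply Finset.sum_nonneg
    intro e _
    split
    · refine Real.rpow_nonneg ?_ p
      induction e using Sym2.ind with
      | _ x y => exact abs_nonneg _
    · exact le_refl 0
  -- Cap set ⊆ Mod set
  have hsub : Sc ⊆ Sm := by
    rintro m ⟨U, hUA, hUB, rfl⟩
    refine ⟨ediff U, ⟨fun e => ?_, ?_⟩, rfl⟩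
    · induction e using Sym2.ind with
      | _ x y => exact abs_nonneg _
    · rintro ⟨a, b, w⟩ ⟨ha, hb⟩
      have := walk_ediff_le U w
      rw [hUA a ha, hUB b hb] at this
      simpa [lenρ] using this
  -- Cap set nonempty
  have hcne : Sc.Nonempty := by
    refine ⟨_, fun x => if x ∈ B then 1 else 0, fun a ha => ?_, fun b hb => ?_, rfl⟩
    · simp [Finset.disjoint_left.mp hAB ha]
    · simp [hb]
  -- Mod set nonempty
  have hmne : Sm.Nonempty := Set.Nonempty.mono hsub hcne
  apply le_antisymm
  · exact csInf_le_csInf hmbdd hcne hsub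
  · -- CapE ≤ ModE
    apply le_csInf hmne
    rintro m ⟨ρ, hadm, rfl⟩
    have hρ : ∀ e, 0 ≤ ρ e := hadm.1
    set U : V → ℝ := fun x => min (dρ G A ρ x) 1 with hU
    have hUA : ∀ a ∈ A, U a = 0 := by
      intro a ha
      simp [hU, dρ_eq_zero hG hA hρ ha]
    have hUB : ∀ b ∈ B, U b = 1 := by
      intro b hb
      simp [hU, min_eq_right (dρ_ge_one hadm hG hA hb)]
    have hcap : capMass G p U ≤ massE G p ρ := by
      apply Finset.sum_le_sum
      intro e _
      induction e using Sym2.ind with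
      | _ x y =>
        split
        · rename_i hxy
          rw [SimpleGraph.mem_edgeSet] at hxy
          apply Real.rpow_le_rpow (abs_nonneg _) _ hp0
          exact le_trans (min1_lip _ _) (dρ_abs_adj hG hA hρ hxy)
        · exact le_refl (0 : ℝ)
    exact le_trans (csInf_le hcbdd ⟨U, hUA, hUB, rfl⟩) hcap
end
end
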